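/- Assume that x ↦ Δ(x)² e^{−H(x)} is integrable and that x ↦ Δ(x) e^{−H(x)} is integrable. Then |∫_{ℝ^m×ℝ^m} Δ(x) e^{−H(x)} dx| ≤ ∫_{ℝ^m×ℝ^m} Δ(x)² e^{−H(x)} dx; that is, the mean energy increment μ is bounded in absolute value by its second moment s². -/
import Mathlib


open MeasureTheory

/-- inequality `eqn:mubd` of the paper: `|μ| ≤ s²`.
For a measurable, volume-preserving, time-reversible bijection `ψ` of phase space
`ℝ^m × ℝ^m`, with energy increment `Δ(x) = H(ψ x) - H x`, if `Δ² e^{-H}` and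
`Δ e^{-H}` are integrable, then the mean energy increment is bounded in absolute
value by its second moment:
`|∫ Δ(x) e^{-H(x)} dx| ≤ ∫ Δ(x)² e^{-H(x)} dx`. -/
theorem stmt_3 (m : ℕ) (hm : 0 < m)
    (H : ((Fin m → ℝ) × (Fin m → ℝ)) → ℝ) (hHmeas : Measurable H)
    (hHS : ∀ x : (Fin m → ℝ) × (Fin m → ℝ), H (x.1, -x.2) = H x)
    (hHint : Integrable (fun x : (Fin m → ℝ) × (Fin m → ℝ) => Real.exp (-H x)))
    (ψ : ((Fin m → ℝ) × (Fin m → ℝ)) ≃ ((Fin m → ℝ) × (Fin m → ℝ)))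
    (hψmeas : Measurable ψ)
    (hψvol : MeasurePreserving ψ volume volume)
    (hψrev : ∀ x : (Fin m → ℝ) × (Fin m → ℝ),
      ((ψ.symm (x.1, -x.2)).1, -(ψ.symm (x.1, -x.2)).2) = ψ x)
    (hint2 : Integrable (fun x => (H (ψ x) - H x) ^ 2 * Real.exp (-H x)))
    (hint1 : Integrable (fun x => (H (ψ x) - H x) * Real.exp (-H x))) :
    |∫ x, (H (ψ x) - H x) * Real.exp (-H x)| ≤
      ∫ x, (H (ψ x) - H x) ^ 2 * Real.exp (-H x) := by
  set Δ : ((Fin m → ℝ) × (Fin m → ℝ)) → ℝ := fun x => H (ψ x) - H x with hΔdef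
  set w : ((Fin m → ℝ) × (Fin m → ℝ)) → ℝ := fun x => Real.exp (-H x) with hwdef
  set T : ((Fin m → ℝ) × (Fin m → ℝ)) → ((Fin m → ℝ) × (Fin m → ℝ)) :=
    fun x => ((ψ x).1, -(ψ x).2) with hTdef
  -- ψ.symm ∘ S = S ∘ ψ
  have hψsymmS : ∀ x, ψ.symm (x.1, -x.2) = T x := by
    intro x
    have h := hψrev x
    have h1 : (ψ.symm (x.1, -x.2)).1 = (ψ x).1 := by rw [← h]
    have h2' : -(ψ.symm (x.1, -x.2)).2 = (ψ x).2 := by rw [← h]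
    have h2 : (ψ.symm (x.1, -x.2)).2 = -(ψ x).2 := by rw [← h2', neg_neg]
    exact Prod.ext h1 h2
  -- ψ (T x) = (x.1, -x.2)
  have hψT : ∀ x, ψ (T x) = (x.1, -x.2) := by
    intro x
    rw [← hψsymmS x, Equiv.apply_symm_apply]
  -- T is an involution
  have hTT : ∀ x, T (T x) = x := by
    intro x
    show ((ψ (T x)).1, -(ψ (T x)).2) = x
    rw [hψT x]
    simp
  have hTinj : Function.Injective T := Function.LeftInverse.injective hTT
  have hTmeas : Measurable T := (hψmeas.fst).prodMk (hψmeas.snd.neg)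
  have hTemb : MeasurableEmbedding T := hTmeas.measurableEmbedding hTinj
  -- T is measure preserving
  have hS : MeasurePreserving
      (fun p : (Fin m → ℝ) × (Fin m → ℝ) => (p.1, -p.2)) volume volume := by
    have h := (MeasurePreserving.id (volume : Measure (Fin m → ℝ))).prod
      (Measure.measurePreserving_neg (volume : Measure (Fin m → ℝ)))
    rw [← Measure.volume_eq_prod] at h
    exact h
  have hTmp : MeasurePreserving T volume volume := hS.comp hψvol
  -- basic identities
  have hHT : ∀ x, H (T x) = H (ψ x) := fun x => hHS (ψ x)
  have hHψT : ∀ x, H (ψ (T x)) = H x := by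
    intro x; rw [hψT x, hHS]
  have hΔT : ∀ x, Δ (T x) = -Δ x := by
    intro x
    simp only [hΔdef, hHψT, hHT]
    ring
  have hwT : ∀ x, w (T x) = Real.exp (-H (ψ x)) := by
    intro x
    simp only [hwdef, hHT]
  -- measurability
  have hΔmeas : Measurable Δ := (hHmeas.comp hψmeas).sub hHmeas
  have hAmeas : MeasurableSet {x : (Fin m → ℝ) × (Fin m → ℝ) | 0 < Δ x} :=
    measurableSet_lt measurable_const hΔmeas
  have hwmeas : Measurable w := (hHmeas.neg).exp
  -- the key function f
  set f : ((Fin m → ℝ) × (Fin m → ℝ)) → ℝ :=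
    fun x => if 0 < Δ x then Δ x * (w x - Real.exp (-H (ψ x))) else 0 with hfdef
  have hfmeas : Measurable f := by
    apply Measurable.ite hAmeas
    · exact hΔmeas.mul (hwmeas.sub ((hHmeas.comp hψmeas).neg.exp))
    · exact measurable_const
  have hfnonneg : ∀ x, 0 ≤ f x := by
    intro x
    simp only [hfdef]
    split_ifs with hx
    · apply mul_nonneg hx.le
      have h : Real.exp (-H (ψ x)) ≤ Real.exp (-H x) := by
        apply Real.exp_le_exp.mpr
        simp only [hΔdef] at hx
        linarith
      simp only [hwdef]
      linarith
    · exact le_refl 0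
  have hfle : ∀ x, f x ≤ Δ x ^ 2 * w x := by
    intro x
    simp only [hfdef]
    split_ifs with hx
    · have key : w x - Real.exp (-H (ψ x)) ≤ Δ x * w x := by
        have h1 : Real.exp (-H (ψ x)) = Real.exp (-Δ x) * w x := by
          rw [hwdef, hΔdef, ← Real.exp_add]; ring_nf
        rw [h1]
        have h2 : 1 - Δ x ≤ Real.exp (-Δ x) := by
          have := Real.add_one_le_exp (-Δ x)
          linarith
        have hw : 0 < w x := Real.exp_pos _
        nlinarith
      calc Δ x * (w x - Real.exp (-H (ψ x))) ≤ Δ x * (Δ x * w x) :=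
            mul_le_mul_of_nonneg_left key hx.le
        _ = Δ x ^ 2 * w x := by ring
    · positivity
  have hint2' : Integrable (fun x => Δ x ^ 2 * w x) := hint2
  have hint1' : Integrable (fun x => Δ x * w x) := hint1
  have hfint : Integrable f := by
    apply Integrable.mono' hint2' hfmeas.aestronglyMeasurable
    filter_upwards with x
    rw [Real.norm_eq_abs, abs_of_nonneg (hfnonneg x)]
    exact hfle x
  -- splitting the integral
  set g1 : ((Fin m → ℝ) × (Fin m → ℝ)) → ℝ :=
    fun x => if 0 < Δ x then Δ x * w x else 0 with hg1def
  set g2 : ((Fin m → ℝ) × (Fin m → ℝ)) → ℝ :=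
    fun x => if 0 < Δ x then 0 else Δ x * w x with hg2def
  have hg1eq : g1 = Set.indicator {x | 0 < Δ x} (fun x => Δ x * w x) := by
    funext x
    rw [Set.indicator_apply]
    simp only [Set.mem_setOf_eq, hg1def]
  have hg2eq : g2 = Set.indicator {x | 0 < Δ x}ᶜ (fun x => Δ x * w x) := by
    funext x
    rw [Set.indicator_apply]
    simp only [Set.mem_compl_iff, Set.mem_setOf_eq, hg2def]
    by_cases hx : 0 < Δ x <;> simp [hx]
  have hg1int : Integrable g1 := by
    rw [hg1eq]; exact hint1'.indicator hAmeas
  have hg2int : Integrable g2 := by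
    rw [hg2eq]; exact hint1'.indicator hAmeas.compl
  have hsplit : (∫ x, Δ x * w x) = (∫ x, g1 x) + ∫ x, g2 x := by
    rw [← integral_add hg1int hg2int]
    apply integral_congr_ae
    filter_upwards with x
    simp only [Pi.add_apply, hg1def, hg2def]
    split_ifs <;> ring
  -- change of variables on g2
  have hg2cov : (∫ x, g2 x) = ∫ x, g2 (T x) := (hTmp.integral_comp hTemb g2).symm
  have hg2Tint : Integrable (fun x => g2 (T x)) :=
    (hTmp.integrable_comp_emb hTemb).mpr hg2int
  have hg2T : ∀ x, g2 (T x) = if 0 < Δ x then -(Δ x * Real.exp (-H (ψ x))) else 0 := by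
    intro x
    simp only [hg2def, hΔT x, hwT x]
    rcases lt_trichotomy (Δ x) 0 with h | h | h
    · have h1 : ¬ 0 < Δ x := by linarith
      have h2 : 0 < -Δ x := by linarith
      rw [if_pos h2, if_neg h1]
    · simp [h]
    · have h2 : ¬ 0 < -Δ x := by linarith
      rw [if_neg h2, if_pos h]
      ring
  have hmain : (∫ x, Δ x * w x) = ∫ x, f x := by
    have hsum : ∀ x, g1 x + g2 (T x) = f x := by
      intro x
      rw [hg2T x]
      simp only [hg1def, hfdef]
      by_cases hx : 0 < Δ x
      · rw [if_pos hx, if_pos hx, if_pos hx]; ring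
      · rw [if_neg hx, if_neg hx, if_neg hx]; ring
    rw [hsplit, hg2cov, ← integral_add hg1int hg2Tint]
    apply integral_congr_ae
    filter_upwards with x
    exact hsum x
  show |∫ x, Δ x * w x| ≤ ∫ x, Δ x ^ 2 * w x
  rw [hmain, abs_of_nonneg (integral_nonneg hfnonneg)]
  exact integral_mono hfint hint2' hfle
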